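/- For d = 1 and λ ∈ (0,1), define Λ(s) = ln((λe^{−s} + e^{s})/(1+λ)) for s ≥ (1/2)ln λ and Λ(s) = ln(2√λ/(1+λ)) for s < (1/2)ln λ. Then for every x ∈ [0,1], sup_{s∈ℝ}(sx − Λ(s)) = (x/2)ln λ − ln(2√λ/(1+λ)) + (1+x)ln√(1+x) + (1−x)ln√(1−x). -/

import Mathlib

/-!
Put `p = (1 + x) / 2`, `q = (1 - x) / 2`. Concavity of `log` gives
`q log (λe⁻ˢ / q) + p log (eˢ / p) ≤ log (λe⁻ˢ + eˢ)`, which rearranges to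
`s x - log ((λe⁻ˢ + eˢ) / (1 + λ))` ≤ the claimed value, with equality when
`e²ˢ (1 - x) = λ (1 + x)`.
The truncated `Λ(s)` is the untruncated one evaluated at `max s (½ ln λ)`, so for `x ≥ 0` the
truncation only lowers `s x - Λ(s)`. For `x < 1` the optimal `s` lies above `½ ln λ` and the
supremum is attained; for `x = 1` it is approached as `s → ∞`.
-/

open Real Filter Topology

/-- With Lean's `y / 0 = 0` and `log 0 = 0`, a term with zero weight vanishes, matching the
convention `0 · log (a / 0) = 0`. -/
noncomputable def logSumGap (p q a b : ℝ) : ℝ :=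
  log (a + b) - (p * log (a / p) + q * log (b / q))

lemma logSumGap_nonneg {p q a b : ℝ} (hp : 0 ≤ p) (hq : 0 ≤ q) (hpq : p + q = 1)
    (ha : 0 < a) (hb : 0 < b) : 0 ≤ logSumGap p q a b := by
  rw [logSumGap, sub_nonneg]
  rcases hp.eq_or_lt with rfl | hp
  · obtain rfl : q = 1 := by linarith
    simpa using log_le_log hb (by linarith)
  rcases hq.eq_or_lt with rfl | hq
  · obtain rfl : p = 1 := by linarith
    simpa using log_le_log ha (by linarith)
  simpa [mul_div_cancel₀ _ hp.ne', mul_div_cancel₀ _ hq.ne'] using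
    strictConcaveOn_log_Ioi.concaveOn.2 (div_pos ha hp) (div_pos hb hq) hp.le hq.le hpq

lemma logSumGap_eq_zero {p q a b : ℝ} (hp : 0 < p) (hq : 0 < q) (hpq : p + q = 1)
    (h : a / p = b / q) : logSumGap p q a b = 0 := by
  have hab : a + b = a / p :=
    calc a + b = p * (a / p) + q * (b / q) := by field_simp
      _ = a / p := by rw [← h, ← add_mul, hpq, one_mul]
  rw [logSumGap, ← h, ← add_mul, hpq, one_mul, hab, sub_self]

lemma mul_log_div_of_pos {a : ℝ} (ha : 0 < a) (p : ℝ) :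
    p * log (a / p) = p * log a - p * log p := by
  rcases eq_or_ne p 0 with rfl | hp
  · simp
  · rw [log_div ha.ne' hp, mul_sub]

lemma mul_log_sqrt {c : ℝ} (hc : 0 ≤ c) :
    c * log √c = c / 2 * log (c / 2) + c / 2 * log 2 := by
  rcases hc.eq_or_lt with rfl | hc
  · simp
  · rw [log_sqrt hc.le, log_div hc.ne' two_ne_zero]
    ring

/-- The log-moment generating function of the law on `{-1, 1}` with weights
`λ / (1 + λ)` and `1 / (1 + λ)`; `truncCGF` is the paper's `Λ`. -/
noncomputable def twoPointCGF (lam s : ℝ) : ℝ :=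
  log ((lam * exp (-s) + exp s) / (1 + lam))

noncomputable def truncCGF (lam s : ℝ) : ℝ :=
  if 1 / 2 * log lam ≤ s then twoPointCGF lam s else log (2 * √lam / (1 + lam))

noncomputable def twoPointRate (lam x : ℝ) : ℝ :=
  x / 2 * log lam - log (2 * √lam / (1 + lam))
    + (1 + x) * log √(1 + x) + (1 - x) * log √(1 - x)

lemma logSumGap_eq_zero_of_exp_sq {lam x s : ℝ} (hx0 : -1 < x) (hx1 : x < 1)
    (hs : exp s ^ 2 * (1 - x) = lam * (1 + x)) :
    logSumGap ((1 - x) / 2) ((1 + x) / 2) (lam * exp (-s)) (exp s) = 0 := by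
  have hp : 1 + x ≠ 0 := by linarith
  have hq : 1 - x ≠ 0 := by linarith
  refine logSumGap_eq_zero (by linarith) (by linarith) (by ring) ?_
  rw [exp_neg]
  field_simp
  linear_combination -hs

section

variable {lam : ℝ} (h0 : 0 < lam)
include h0

lemma twoPointCGF_half_log : twoPointCGF lam (1 / 2 * log lam) = log (2 * √lam / (1 + lam)) := by
  have hexp : exp (1 / 2 * log lam) = √lam := by
    rw [one_div_mul_eq_div, exp_half, exp_log h0]
  have hsqrt : 0 < √lam := sqrt_pos.2 h0
  rw [twoPointCGF, exp_neg, hexp]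
  congr 2
  field_simp
  rw [sq_sqrt h0.le]
  ring

lemma truncCGF_eq_twoPointCGF_max (s : ℝ) :
    truncCGF lam s = twoPointCGF lam (max s (1 / 2 * log lam)) := by
  rw [truncCGF]
  split_ifs with hs
  · rw [max_eq_left hs]
  · rw [max_eq_right (not_le.1 hs).le, twoPointCGF_half_log h0]

lemma mul_sub_twoPointCGF_eq {x : ℝ} (hx0 : -1 ≤ x) (hx1 : x ≤ 1) (s : ℝ) :
    s * x - twoPointCGF lam s =
      twoPointRate lam x - logSumGap ((1 - x) / 2) ((1 + x) / 2) (lam * exp (-s)) (exp s) := by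
  have h1 : 0 < 1 + lam := by linarith
  rw [twoPointCGF, twoPointRate, logSumGap, mul_log_sqrt (by linarith), mul_log_sqrt (by linarith),
    mul_log_div_of_pos (by positivity), mul_log_div_of_pos (exp_pos s),
    log_div (by positivity) h1.ne', log_div (by positivity) h1.ne',
    log_mul two_ne_zero (sqrt_pos.2 h0).ne', log_sqrt h0.le, log_mul h0.ne' (exp_pos _).ne',
    log_exp, log_exp]
  ring

lemma mul_sub_truncCGF_le_twoPointRate {x : ℝ} (hx0 : 0 ≤ x) (hx1 : x ≤ 1) (s : ℝ) :
    s * x - truncCGF lam s ≤ twoPointRate lam x := by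
  set t := max s (1 / 2 * log lam)
  have hgap := logSumGap_nonneg (a := lam * exp (-t)) (b := exp t)
    (by linarith : 0 ≤ (1 - x) / 2) (by linarith : 0 ≤ (1 + x) / 2) (by ring) (by positivity)
    (exp_pos t)
  rw [truncCGF_eq_twoPointCGF_max h0]
  calc s * x - twoPointCGF lam t ≤ t * x - twoPointCGF lam t := by
        gcongr
        exact le_max_left _ _
    _ ≤ twoPointRate lam x := by
        rw [mul_sub_twoPointCGF_eq h0 (by linarith) hx1]
        linarith

lemma exists_mul_sub_truncCGF_eq_twoPointRate {x : ℝ} (hx0 : 0 ≤ x) (hx1 : x < 1) :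
    ∃ s, s * x - truncCGF lam s = twoPointRate lam x := by
  set s := log (lam * (1 + x) / (1 - x)) / 2
  have hs : 1 / 2 * log lam ≤ s := by
    rw [one_div_mul_eq_div]
    refine div_le_div_of_nonneg_right (log_le_log h0 ?_) two_pos.le
    rw [le_div_iff₀ (by linarith)]
    nlinarith
  have hexp : exp s ^ 2 * (1 - x) = lam * (1 + x) := by
    rw [exp_half, sq_sqrt (exp_pos _).le, exp_log (by positivity)]
    field_simp [(by linarith : 1 - x ≠ 0)]
  refine ⟨s, ?_⟩
  rw [truncCGF, if_pos hs, mul_sub_twoPointCGF_eq h0 (by linarith) hx1.le,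
    logSumGap_eq_zero_of_exp_sq (by linarith) hx1 hexp, sub_zero]

lemma tendsto_logSumGap_zero_one :
    Tendsto (fun s => logSumGap 0 1 (lam * exp (-s)) (exp s)) atTop (𝓝 0) := by
  have hgap (s : ℝ) : logSumGap 0 1 (lam * exp (-s)) (exp s) = log (lam * exp (-s) ^ 2 + 1) := by
    have hsum : lam * exp (-s) + exp s = exp s * (lam * exp (-s) ^ 2 + 1) := by
      rw [exp_neg]
      field_simp
    have hpos : 0 < lam * exp (-s) ^ 2 + 1 := by positivity
    rw [logSumGap, hsum, log_mul (exp_pos s).ne' hpos.ne', div_one, log_exp]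
    ring
  simp_rw [hgap]
  simpa using ((tendsto_exp_neg_atTop_nhds_zero.pow 2).const_mul lam |>.add_const 1).log
    (by norm_num)

lemma tendsto_mul_one_sub_twoPointCGF :
    Tendsto (fun s => s * 1 - twoPointCGF lam s) atTop (𝓝 (twoPointRate lam 1)) := by
  have hgap (s : ℝ) := mul_sub_twoPointCGF_eq h0 (by norm_num) le_rfl s
  simp only [sub_self, zero_div, add_self_div_two] at hgap
  simp_rw [hgap]
  simpa using tendsto_const_nhds.sub (tendsto_logSumGap_zero_one h0)

end

theorem stmt6 (lam : ℝ) (h0 : 0 < lam) (x : ℝ) (hx0 : 0 ≤ x) (hx1 : x ≤ 1) :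
    IsLUB {v : ℝ | ∃ s : ℝ, v = s * x -
        (if (1 / 2) * Real.log lam ≤ s
         then Real.log ((lam * Real.exp (-s) + Real.exp s) / (1 + lam))
         else Real.log (2 * Real.sqrt lam / (1 + lam)))}
      (x / 2 * Real.log lam - Real.log (2 * Real.sqrt lam / (1 + lam))
        + (1 + x) * Real.log (Real.sqrt (1 + x))
        + (1 - x) * Real.log (Real.sqrt (1 - x))) := by
  change IsLUB {v | ∃ s, v = s * x - truncCGF lam s} (twoPointRate lam x)
  refine isLUB_of_mem_closure ?_ ?_
  · rintro _ ⟨s, rfl⟩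
    exact mul_sub_truncCGF_le_twoPointRate h0 hx0 hx1 s
  rcases hx1.lt_or_eq with hx1 | rfl
  · obtain ⟨s, hs⟩ := exists_mul_sub_truncCGF_eq_twoPointRate h0 hx0 hx1
    exact subset_closure ⟨s, hs.symm⟩
  · refine mem_closure_of_tendsto (tendsto_mul_one_sub_twoPointCGF h0) ?_
    filter_upwards [eventually_ge_atTop (1 / 2 * log lam)] with s hs
    exact ⟨s, by rw [truncCGF, if_pos hs]⟩
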